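/- Let Γ ∈ M_n(ℂ) be invertible and v, w ∈ ℂⁿ. Define η₁(x,t) := exp(−(1/2)(Γ⁻¹·x + Γ·t))·v and η₂(x,t) := exp((1/2)(Γ⁻¹·x + Γ·t))·w, where exp is the matrix exponential. Then: (i) with a₀ ≡ −1/2 and f₀ ≡ 0, the pair (η₁, η₂) solves the linear system Γ·∂_x η₁ = −(1/2)·η₁, Γ·∂_x η₂ = (1/2)·η₂, ∂_t η₁ = −(1/2)·Γ·η₁, ∂_t η₂ = (1/2)·Γ·η₂; and (ii) if X, Y ∈ M_n(ℂ) satisfy Γ·X + X·Γᴴ = v·vᴴ and Γ·Y + Y·Γᴴ = w·wᴴ, then Ω(x,t) := exp(−(1/2)(Γ⁻¹x + Γt))·X·exp(−(1/2)((Γᴴ)⁻¹x + Γᴴt)) + exp((1/2)(Γ⁻¹x + Γt))·Y·exp((1/2)((Γᴴ)⁻¹x + Γᴴt)) satisfies Γ·Ω(x,t) + Ω(x,t)·Γᴴ = η₁(x,t)·η₁(x,t)ᴴ + η₂(x,t)·η₂(x,t)ᴴ for all (x,t) ∈ ℝ². -/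

import Mathlib

/-!
Since `Γ` commutes with `Γ⁻¹`, the exponent `x • A + t • B` (with `A = c • Γ⁻¹`, `B = c • Γ`)
splits as `exp (x • A) * exp (t • B)`, so differentiating in `x` or `t` multiplies by `A` or `B`;
this gives the linear system. For the Lyapunov equation, `E = exp (c • (x • Γ⁻¹ + t • Γ))`
commutes with `Γ` and, `c` being real, the second exponential is `Eᴴ`; congruence
`X ↦ E * X * Eᴴ` by a matrix commuting with `Γ` maps a solution for `V * Vᴴ` to one for
`(E * V) * (E * V)ᴴ`, and the equation is additive in both sides.
-/

open Matrix NormedSpace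

/-- Entrywise partial x-derivative of a matrix-valued function on ℝ × ℝ. -/
noncomputable def pdxM {m k : ℕ} (M : ℝ × ℝ → Matrix (Fin m) (Fin k) ℂ)
    (p : ℝ × ℝ) : Matrix (Fin m) (Fin k) ℂ :=
  Matrix.of fun i j => fderiv ℝ (fun q => M q i j) p (1, 0)

/-- Entrywise partial t-derivative of a matrix-valued function on ℝ × ℝ. -/
noncomputable def pdtM {m k : ℕ} (M : ℝ × ℝ → Matrix (Fin m) (Fin k) ℂ)
    (p : ℝ × ℝ) : Matrix (Fin m) (Fin k) ℂ :=
  Matrix.of fun i j => fderiv ℝ (fun q => M q i j) p (0, 1)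

/-- A vector of ℂⁿ viewed as an n×1 column matrix. -/
def colV {n : ℕ} (η : Fin n → ℂ) : Matrix (Fin n) (Fin 1) ℂ :=
  Matrix.of fun i _ => η i

theorem hasFDerivAt_exp_fst_smul_add_snd_smul {𝔸 : Type*} [NormedRing 𝔸] [NormedAlgebra ℝ 𝔸]
    [CompleteSpace 𝔸] {A B : 𝔸} (h : Commute A B) (p : ℝ × ℝ) :
    HasFDerivAt (fun q : ℝ × ℝ => exp (q.1 • A + q.2 • B))
      (exp (p.1 • A + p.2 • B) •
        ((ContinuousLinearMap.fst ℝ ℝ ℝ).smulRight A +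
          (ContinuousLinearMap.snd ℝ ℝ ℝ).smulRight B)) p := by
  let _ : NormedAlgebra ℚ 𝔸 := .restrictScalars ℚ ℝ 𝔸
  have hsplit (q : ℝ × ℝ) : exp (q.1 • A + q.2 • B) = exp (q.1 • A) * exp (q.2 • B) :=
    exp_add_of_commute ((h.smul_left q.1).smul_right q.2)
  have hA := (hasDerivAt_exp_smul_const A p.1).hasFDerivAt.comp p hasFDerivAt_fst
  have hB := (hasDerivAt_exp_smul_const B p.2).hasFDerivAt.comp p hasFDerivAt_snd
  simp_rw [hsplit]
  refine (hA.mul' hB).congr_fderiv ?_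
  have hAB : Commute A (exp (p.2 • B)) := (h.smul_right p.2).exp_right
  ext <;> simp [mul_assoc, hAB.eq]

section PartialDerivatives

variable {m k : ℕ} {E : Type*} [NormedAddCommGroup E] [NormedSpace ℝ E] [FiniteDimensional ℝ E]
  {F : ℝ × ℝ → E} {F' : ℝ × ℝ →L[ℝ] E} {p : ℝ × ℝ}

theorem pdxM_of_hasFDerivAt (hF : HasFDerivAt F F' p) (L : E →ₗ[ℝ] Matrix (Fin m) (Fin k) ℂ) :
    pdxM (fun q => L (F q)) p = L (F' (1, 0)) := by
  ext i j
  have := (((entryLinearMap ℝ ℂ i j).comp L).toContinuousLinearMap.hasFDerivAt.comp p hF).fderiv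
  exact congr($this (1, 0))

theorem pdtM_of_hasFDerivAt (hF : HasFDerivAt F F' p) (L : E →ₗ[ℝ] Matrix (Fin m) (Fin k) ℂ) :
    pdtM (fun q => L (F q)) p = L (F' (0, 1)) := by
  ext i j
  have := (((entryLinearMap ℝ ℂ i j).comp L).toContinuousLinearMap.hasFDerivAt.comp p hF).fderiv
  exact congr($this (0, 1))

end PartialDerivatives

section MatrixExp

variable {n k : ℕ} {A B : Matrix (Fin n) (Fin n) ℂ}

theorem pdxM_exp_fst_smul_add_snd_smul_mul (h : Commute A B) (C : Matrix (Fin n) (Fin k) ℂ)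
    (p : ℝ × ℝ) :
    pdxM (fun q => exp (q.1 • A + q.2 • B) * C) p = A * (exp (p.1 • A + p.2 • B) * C) := by
  open scoped Matrix.Norms.Operator in
  refine (pdxM_of_hasFDerivAt (hasFDerivAt_exp_fst_smul_add_snd_smul h p)
    (mulRightLinearMap (Fin n) ℝ C)).trans ?_
  have hA : Commute A (exp (p.1 • A + p.2 • B)) :=
    (((Commute.refl A).smul_right p.1).add_right (h.smul_right p.2)).exp_right
  simp only [smul_add, _root_.add_apply, _root_.smul_apply, ContinuousLinearMap.smulRight_apply,
    ContinuousLinearMap.coe_fst', ContinuousLinearMap.coe_snd', one_smul, zero_smul, smul_eq_mul,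
    mul_zero, add_zero, mulRightLinearMap_apply, ← Matrix.mul_assoc, hA.eq]
  -- the two `exp`s left differ only in their (defeq) topologies: operator norm vs. entrywise
  rfl

theorem pdtM_exp_fst_smul_add_snd_smul_mul (h : Commute A B) (C : Matrix (Fin n) (Fin k) ℂ)
    (p : ℝ × ℝ) :
    pdtM (fun q => exp (q.1 • A + q.2 • B) * C) p = B * (exp (p.1 • A + p.2 • B) * C) := by
  open scoped Matrix.Norms.Operator in
  refine (pdtM_of_hasFDerivAt (hasFDerivAt_exp_fst_smul_add_snd_smul h p)
    (mulRightLinearMap (Fin n) ℝ C)).trans ?_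
  have hB : Commute B (exp (p.1 • A + p.2 • B)) :=
    ((h.symm.smul_right p.1).add_right ((Commute.refl B).smul_right p.2)).exp_right
  simp only [smul_add, _root_.add_apply, _root_.smul_apply, ContinuousLinearMap.smulRight_apply,
    ContinuousLinearMap.coe_fst', ContinuousLinearMap.coe_snd', one_smul, zero_smul, smul_eq_mul,
    mul_zero, zero_add, mulRightLinearMap_apply, ← Matrix.mul_assoc, hB.eq]
  rfl

end MatrixExp

theorem lyapunov_conj_of_commute {m k α : Type*} [Fintype m] [Fintype k] [Semiring α] [StarRing α]
    {Γ E X : Matrix m m α} {V : Matrix m k α} (hE : Commute Γ E)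
    (hX : Γ * X + X * Γᴴ = V * Vᴴ) :
    Γ * (E * X * Eᴴ) + E * X * Eᴴ * Γᴴ = (E * V) * (E * V)ᴴ := by
  have hEH : Eᴴ * Γᴴ = Γᴴ * Eᴴ := by rw [← conjTranspose_mul, hE.eq, conjTranspose_mul]
  calc Γ * (E * X * Eᴴ) + E * X * Eᴴ * Γᴴ = E * (Γ * X + X * Γᴴ) * Eᴴ := by
        simp only [Matrix.mul_add, Matrix.add_mul, Matrix.mul_assoc, hEH]
        rw [← Matrix.mul_assoc Γ E, hE.eq, Matrix.mul_assoc]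
    _ = (E * V) * (E * V)ᴴ := by simp only [hX, conjTranspose_mul, Matrix.mul_assoc]

theorem smul_ofReal_smul_add_ofReal_smul {M : Type*} [AddCommGroup M] [Module ℂ M] (c : ℂ)
    (x t : ℝ) (a b : M) : c • ((x : ℂ) • a + (t : ℂ) • b) = x • (c • a) + t • (c • b) := by
  simp only [smul_add, smul_comm c, Complex.coe_smul]

theorem Matrix.commute_nonsing_inv {m α : Type*} [Fintype m] [DecidableEq m] [CommRing α]
    (A : Matrix m m α) : Commute A A⁻¹ := by
  by_cases h : IsUnit A.det
  · exact (mul_nonsing_inv A h).trans (nonsing_inv_mul A h).symm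
  · rw [nonsing_inv_apply_not_isUnit A h]
    exact Commute.zero_right A

section ExpGamma

variable {n k : ℕ} {Γ : Matrix (Fin n) (Fin n) ℂ}

theorem mul_pdxM_exp_smul (hΓ : IsUnit Γ) (c : ℂ) (C : Matrix (Fin n) (Fin k) ℂ) (p : ℝ × ℝ) :
    Γ * pdxM (fun q => exp (c • ((q.1 : ℂ) • Γ⁻¹ + (q.2 : ℂ) • Γ)) * C) p
      = c • (exp (c • ((p.1 : ℂ) • Γ⁻¹ + (p.2 : ℂ) • Γ)) * C) := by
  have hcomm : Commute (c • Γ⁻¹) (c • Γ) := (Γ.commute_nonsing_inv.symm.smul_left c).smul_right c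
  simp only [smul_ofReal_smul_add_ofReal_smul]
  rw [pdxM_exp_fst_smul_add_snd_smul_mul hcomm, ← Matrix.mul_assoc, Matrix.mul_smul,
    mul_nonsing_inv Γ ((isUnit_iff_isUnit_det Γ).mp hΓ), Matrix.smul_mul, Matrix.one_mul]

theorem pdtM_exp_smul (c : ℂ) (C : Matrix (Fin n) (Fin k) ℂ) (p : ℝ × ℝ) :
    pdtM (fun q => exp (c • ((q.1 : ℂ) • Γ⁻¹ + (q.2 : ℂ) • Γ)) * C) p
      = c • (Γ * (exp (c • ((p.1 : ℂ) • Γ⁻¹ + (p.2 : ℂ) • Γ)) * C)) := by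
  have hcomm : Commute (c • Γ⁻¹) (c • Γ) := (Γ.commute_nonsing_inv.symm.smul_left c).smul_right c
  simp only [smul_ofReal_smul_add_ofReal_smul]
  rw [pdtM_exp_fst_smul_add_snd_smul_mul hcomm, Matrix.smul_mul]

theorem lyapunov_exp_smul_conj {c : ℂ} (hc : star c = c) (x t : ℝ) {X : Matrix (Fin n) (Fin n) ℂ}
    {V : Matrix (Fin n) (Fin k) ℂ} (hX : Γ * X + X * Γᴴ = V * Vᴴ) :
    Γ * (exp (c • ((x : ℂ) • Γ⁻¹ + (t : ℂ) • Γ)) * X * exp (c • ((x : ℂ) • (Γᴴ)⁻¹ + (t : ℂ) • Γᴴ)))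
      + exp (c • ((x : ℂ) • Γ⁻¹ + (t : ℂ) • Γ)) * X * exp (c • ((x : ℂ) • (Γᴴ)⁻¹ + (t : ℂ) • Γᴴ))
        * Γᴴ
      = (exp (c • ((x : ℂ) • Γ⁻¹ + (t : ℂ) • Γ)) * V)
        * (exp (c • ((x : ℂ) • Γ⁻¹ + (t : ℂ) • Γ)) * V)ᴴ := by
  have hadj : exp (c • ((x : ℂ) • (Γᴴ)⁻¹ + (t : ℂ) • Γᴴ))
      = (exp (c • ((x : ℂ) • Γ⁻¹ + (t : ℂ) • Γ)))ᴴ := by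
    rw [← exp_conjTranspose]
    simp [conjTranspose_nonsing_inv, hc]
  have hcomm : Commute Γ (exp (c • ((x : ℂ) • Γ⁻¹ + (t : ℂ) • Γ))) :=
    (((Γ.commute_nonsing_inv.smul_right _).add_right
      ((Commute.refl Γ).smul_right _)).smul_right c).exp_right
  rw [hadj]
  exact lyapunov_conj_of_commute hcomm hX

end ExpGamma

theorem stmt_8 {n : ℕ} (Γ : Matrix (Fin n) (Fin n) ℂ) (hΓ : IsUnit Γ)
    (v w : Fin n → ℂ)
    (η₁ η₂ : ℝ × ℝ → Matrix (Fin n) (Fin 1) ℂ)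
    (hη₁ : η₁ = fun p => NormedSpace.exp
        (-((1 : ℂ)/2) • ((p.1 : ℂ) • Γ⁻¹ + (p.2 : ℂ) • Γ)) * colV v)
    (hη₂ : η₂ = fun p => NormedSpace.exp
        (((1 : ℂ)/2) • ((p.1 : ℂ) • Γ⁻¹ + (p.2 : ℂ) • Γ)) * colV w) :
    -- (i) the linear system with a₀ ≡ -1/2 and f₀ ≡ 0
    ((∀ p, Γ * pdxM η₁ p = -((1 : ℂ)/2) • η₁ p) ∧
     (∀ p, Γ * pdxM η₂ p = ((1 : ℂ)/2) • η₂ p) ∧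
     (∀ p, pdtM η₁ p = -((1 : ℂ)/2) • (Γ * η₁ p)) ∧
     (∀ p, pdtM η₂ p = ((1 : ℂ)/2) • (Γ * η₂ p))) ∧
    -- (ii) the corresponding solution of the Lyapunov equation
    (∀ X Y : Matrix (Fin n) (Fin n) ℂ,
      Γ * X + X * Γᴴ = colV v * (colV v)ᴴ →
      Γ * Y + Y * Γᴴ = colV w * (colV w)ᴴ →
      ∀ p : ℝ × ℝ,
        Γ * (NormedSpace.exp (-((1 : ℂ)/2) • ((p.1 : ℂ) • Γ⁻¹ + (p.2 : ℂ) • Γ)) * X *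
              NormedSpace.exp (-((1 : ℂ)/2) • ((p.1 : ℂ) • (Γᴴ)⁻¹ + (p.2 : ℂ) • Γᴴ))
            + NormedSpace.exp (((1 : ℂ)/2) • ((p.1 : ℂ) • Γ⁻¹ + (p.2 : ℂ) • Γ)) * Y *
              NormedSpace.exp (((1 : ℂ)/2) • ((p.1 : ℂ) • (Γᴴ)⁻¹ + (p.2 : ℂ) • Γᴴ)))
        + (NormedSpace.exp (-((1 : ℂ)/2) • ((p.1 : ℂ) • Γ⁻¹ + (p.2 : ℂ) • Γ)) * X *
              NormedSpace.exp (-((1 : ℂ)/2) • ((p.1 : ℂ) • (Γᴴ)⁻¹ + (p.2 : ℂ) • Γᴴ))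
            + NormedSpace.exp (((1 : ℂ)/2) • ((p.1 : ℂ) • Γ⁻¹ + (p.2 : ℂ) • Γ)) * Y *
              NormedSpace.exp (((1 : ℂ)/2) • ((p.1 : ℂ) • (Γᴴ)⁻¹ + (p.2 : ℂ) • Γᴴ))) * Γᴴ
        = η₁ p * (η₁ p)ᴴ + η₂ p * (η₂ p)ᴴ) := by
  subst hη₁ hη₂
  refine ⟨⟨mul_pdxM_exp_smul hΓ _ _, mul_pdxM_exp_smul hΓ _ _, pdtM_exp_smul _ _,
    pdtM_exp_smul _ _⟩, fun X Y hX hY p => ?_⟩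
  rw [Matrix.mul_add, Matrix.add_mul, add_add_add_comm, lyapunov_exp_smul_conj (by simp) _ _ hX,
    lyapunov_exp_smul_conj (by simp) _ _ hY]
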